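/- Let n ≥ 2 and 1 ≤ m < n. Then the ℓ∞-normalized Pascal matrix factors as Q_n = A₂ A₁, where A₂ ∈ ℝ^{n×n} is the block-diagonal matrix diag(I_m, Q_{n-m}) and A₁ ∈ ℝ^{n×n} has the ℓ∞-normalized Pascal matrix Q_m in its top-left m × m block, zeros in the remaining entries of its top m rows, and the banded binomial convolution matrix B_{n,m} as its bottom n − m rows. -/
import Mathlib

/-- Entry `(i, j)` of the `ℓ∞`-normalized lower-triangular Pascal matrix:
`2^{-i} C(i, j)` if `j ≤ i`, else `0`. -/
noncomputable def Qent (i j : ℕ) : ℝ :=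
  if j ≤ i then ((2 : ℝ) ^ i)⁻¹ * (i.choose j : ℝ) else 0

/-- The `ℓ∞`-normalized lower-triangular Pascal matrix `Q_n`. -/
noncomputable def Qmat (n : ℕ) : Matrix (Fin n) (Fin n) ℝ :=
  Matrix.of fun i j => Qent (i : ℕ) (j : ℕ)

/-- Entry `(i, j)` of the banded binomial convolution matrix `B_{·,m}`:
`(B)_{ij} = (b_m)_{j-i} = 2^{-m} C(m, j-i)` if `0 ≤ j - i ≤ m`, else `0`. -/
noncomputable def Bent (m i j : ℕ) : ℝ :=
  if i ≤ j ∧ j ≤ i + m then ((2 : ℝ) ^ m)⁻¹ * (m.choose (j - i) : ℝ) else 0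

/-- The block-diagonal matrix `A₂ = diag(I_m, Q_{n-m}) ∈ ℝ^{n×n}`. -/
noncomputable def A2mat (n m : ℕ) : Matrix (Fin n) (Fin n) ℝ :=
  Matrix.of fun a b =>
    if (a : ℕ) < m ∨ (b : ℕ) < m then (if a = b then 1 else 0)
    else Qent ((a : ℕ) - m) ((b : ℕ) - m)

/-- The matrix `A₁ ∈ ℝ^{n×n}` with `Q_m` in its top-left `m × m` block, zeros in the
remaining entries of its top `m` rows, and `B_{n,m}` as its bottom `n - m` rows. -/
noncomputable def A1mat (n m : ℕ) : Matrix (Fin n) (Fin n) ℝ :=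
  Matrix.of fun a b =>
    if (a : ℕ) < m then Qent (a : ℕ) (b : ℕ)
    else Bent m ((a : ℕ) - m) (b : ℕ)


lemma vandermonde' (p q b : ℕ) :
    (p + q).choose b = ∑ k ∈ Finset.range (b + 1), p.choose k * q.choose (b - k) := by
  rw [Nat.add_choose_eq, Finset.Nat.sum_antidiagonal_eq_sum_range_succ_mk]

lemma key (n m a b : ℕ) (hma : m ≤ a) (ha : a < n) (hb : b < n) :
    ∑ k ∈ Finset.range (n - m), Qent (a - m) k * Bent m k b = Qent a b := by
  by_cases hba : b ≤ a
  · have hterm : ∀ k, Qent (a - m) k * Bent m k b =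
        if k ≤ b then ((2:ℝ)^a)⁻¹ * (((a-m).choose k : ℝ) * (m.choose (b-k) : ℝ)) else 0 := by
      intro k
      unfold Qent Bent
      by_cases h1 : k ≤ a - m
      · by_cases h2 : k ≤ b ∧ b ≤ k + m
        · rw [if_pos h1, if_pos h2, if_pos h2.1]
          have h2a : (2:ℝ)^a = 2^(a-m) * 2^m := (pow_sub_mul_pow 2 hma).symm
          rw [h2a, mul_inv]
          ring
        · rw [if_pos h1, if_neg h2, mul_zero]
          by_cases hkb : k ≤ b
          · rw [if_pos hkb]
            have h0 : m.choose (b - k) = 0 := Nat.choose_eq_zero_of_lt (by omega)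
            rw [h0]
            simp
          · rw [if_neg hkb]
      · rw [if_neg h1, zero_mul]
        by_cases hkb : k ≤ b
        · rw [if_pos hkb]
          have h0 : (a - m).choose k = 0 := Nat.choose_eq_zero_of_lt (by omega)
          rw [h0]
          simp
        · rw [if_neg hkb]
    simp only [hterm]
    have hL : ∑ k ∈ Finset.range (n - m),
        (if k ≤ b then ((2:ℝ)^a)⁻¹ * (((a-m).choose k : ℝ) * (m.choose (b-k) : ℝ)) else 0)
        = ∑ k ∈ Finset.range (max (n - m) (b + 1)),
        (if k ≤ b then ((2:ℝ)^a)⁻¹ * (((a-m).choose k : ℝ) * (m.choose (b-k) : ℝ)) else 0) := by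
      apply Finset.sum_subset (Finset.range_subset_range.2 (le_max_left _ _))
      intro k hk hk'
      simp only [Finset.mem_range, not_lt] at hk hk'
      have : (a - m).choose k = 0 := Nat.choose_eq_zero_of_lt (by omega)
      rw [this]
      simp
    have hR : ∑ k ∈ Finset.range (b + 1),
        (if k ≤ b then ((2:ℝ)^a)⁻¹ * (((a-m).choose k : ℝ) * (m.choose (b-k) : ℝ)) else 0)
        = ∑ k ∈ Finset.range (max (n - m) (b + 1)),
        (if k ≤ b then ((2:ℝ)^a)⁻¹ * (((a-m).choose k : ℝ) * (m.choose (b-k) : ℝ)) else 0) := by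
      apply Finset.sum_subset (Finset.range_subset_range.2 (le_max_right _ _))
      intro k hk hk'
      simp only [Finset.mem_range, not_lt] at hk hk'
      rw [if_neg (by omega)]
    rw [hL, ← hR]
    have : ∑ k ∈ Finset.range (b + 1),
        (if k ≤ b then ((2:ℝ)^a)⁻¹ * (((a-m).choose k : ℝ) * (m.choose (b-k) : ℝ)) else 0)
        = ((2:ℝ)^a)⁻¹ * ∑ k ∈ Finset.range (b + 1), (((a-m).choose k : ℝ) * (m.choose (b-k) : ℝ)) := by
      rw [Finset.mul_sum]
      apply Finset.sum_congr rfl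
      intro k hk
      simp only [Finset.mem_range] at hk
      rw [if_pos (by omega)]
    rw [this]
    have hv : ∑ k ∈ Finset.range (b + 1), (((a-m).choose k : ℝ) * (m.choose (b-k) : ℝ))
        = (a.choose b : ℝ) := by
      have := vandermonde' (a - m) m b
      rw [Nat.sub_add_cancel hma] at this
      rw [this]
      push_cast
      rfl
    rw [hv]
    unfold Qent
    rw [if_pos hba]
  · have hz : ∀ k ∈ Finset.range (n - m), Qent (a - m) k * Bent m k b = 0 := by
      intro k _
      unfold Qent Bent
      by_cases h2 : k ≤ b ∧ b ≤ k + m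
      · rw [if_neg (show ¬ k ≤ a - m by omega), zero_mul]
      · rw [if_neg h2, mul_zero]
    rw [Finset.sum_eq_zero hz]
    unfold Qent
    rw [if_neg hba]


/-- Two-way factorization `Q_n = A₂ A₁`. -/
theorem normalized_pascal_two_way_factorization (n m : ℕ) (hn : 2 ≤ n) (hm : 1 ≤ m)
    (hmn : m < n) : Qmat n = A2mat n m * A1mat n m := by
  ext a b
  rw [Matrix.mul_apply]
  show Qent (a : ℕ) (b : ℕ) = _
  by_cases ham : (a : ℕ) < m
  · rw [Finset.sum_eq_single a]
    · show Qent (a : ℕ) (b : ℕ) = A2mat n m a a * A1mat n m a b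
      show Qent (a : ℕ) (b : ℕ) =
        (if (a : ℕ) < m ∨ (a : ℕ) < m then (if a = a then 1 else 0)
          else Qent ((a : ℕ) - m) ((a : ℕ) - m)) *
        (if (a : ℕ) < m then Qent (a : ℕ) (b : ℕ) else Bent m ((a : ℕ) - m) (b : ℕ))
      rw [if_pos (Or.inl ham), if_pos rfl, if_pos ham, one_mul]
    · intro c _ hc
      show A2mat n m a c * A1mat n m c b = 0
      have hac : a ≠ c := fun h => hc h.symm
      show (if (a : ℕ) < m ∨ (c : ℕ) < m then (if a = c then 1 else 0)
          else Qent ((a : ℕ) - m) ((c : ℕ) - m)) *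
        (if (c : ℕ) < m then Qent (c : ℕ) (b : ℕ) else Bent m ((c : ℕ) - m) (b : ℕ)) = 0
      rw [if_pos (Or.inl ham), if_neg hac, zero_mul]
    · intro h
      exact absurd (Finset.mem_univ a) h
  · push_neg at ham
    set g : ℕ → ℝ := fun c =>
      if c < m then 0 else Qent ((a : ℕ) - m) (c - m) * Bent m (c - m) (b : ℕ) with hg
    have h1 : ∀ c : Fin n, A2mat n m a c * A1mat n m c b = g (c : ℕ) := by
      intro c
      show (if (a : ℕ) < m ∨ (c : ℕ) < m then (if a = c then 1 else 0)
          else Qent ((a : ℕ) - m) ((c : ℕ) - m)) *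
        (if (c : ℕ) < m then Qent (c : ℕ) (b : ℕ) else Bent m ((c : ℕ) - m) (b : ℕ)) = g (c : ℕ)
      by_cases hc : (c : ℕ) < m
      · have hac : a ≠ c := by
          intro h
          rw [h] at ham
          omega
        rw [hg]
        simp only []
        rw [if_pos (Or.inr hc), if_neg hac, zero_mul, if_pos hc]
      · rw [hg]
        simp only []
        rw [if_neg (by omega), if_neg hc, if_neg hc]
    rw [Finset.sum_congr rfl (fun c _ => h1 c), Fin.sum_univ_eq_sum_range g n]
    have h2 : ∑ c ∈ Finset.range n, g c = ∑ c ∈ Finset.range (m + (n - m)), g c := by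
      rw [Nat.add_sub_cancel' hmn.le]
    rw [h2, Finset.sum_range_add]
    have h3 : ∑ i ∈ Finset.range m, g i = 0 := by
      apply Finset.sum_eq_zero
      intro i hi
      rw [hg]
      simp only []
      rw [if_pos (Finset.mem_range.mp hi)]
    have h4 : ∑ i ∈ Finset.range (n - m), g (m + i)
        = ∑ i ∈ Finset.range (n - m), Qent ((a : ℕ) - m) i * Bent m i (b : ℕ) := by
      apply Finset.sum_congr rfl
      intro i _
      rw [hg]
      simp only []
      rw [if_neg (by omega), Nat.add_sub_cancel_left]
    rw [h3, h4, zero_add, key n m (a : ℕ) (b : ℕ) ham a.isLt b.isLt]
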